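/- Let k be a field of characteristic zero, let n ≥ 1, 1 ≤ r ≤ n, d ≥ 1, and let p_1, …, p_r ∈ k^{n+1} be linearly independent vectors. Then the k-vector space of homogeneous polynomials F of degree d in k[x_0, …, x_n] having multiplicity ≥ d at each p_i (i.e., all iterated partial derivatives of F of order ≤ d−1, including F itself, vanish at each p_i) has dimension binomial(n−r+d, d). (Geometrically: the elements of |d(H−E_1−⋯−E_r)| are cones with vertex the span of the r points, and the system has the same dimension as |O_{P^{n−r}}(d)|.) -/

import Mathlib

/-!
A linear change of coordinates `g` moves the linearly independent points `p i` to coordinate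
vectors `e_{f i}`. Substituting `F ↦ F ∘ g` preserves homogeneity, and every partial derivative
of `F ∘ g` of order `s` is a linear combination of partial derivatives of `F` of order `s`
composed with `g`, so it also preserves multiplicity at corresponding points.

At a coordinate vector `e_j`, the derivative `∂^β F` of a form of degree `d`, with `|β| = d - 1`,
takes the value `c • coeff (e_j + β) F` for a positive integer `c`. In characteristic zero, `F`
has multiplicity `≥ d` at `e_j` exactly when the variable `x_j` does not occur in `F`. The space
is therefore that of forms of degree `d` in the remaining `n + 1 - r` variables, which has
dimension `(n - r + d).choose d`.
-/

open MvPolynomial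

/-- The iterated partial derivative along a list of variable indices, as a linear map. -/
noncomputable def iterPderiv (k : Type*) [CommSemiring k] {σ : Type*} (l : List σ) :
    MvPolynomial σ k →ₗ[k] MvPolynomial σ k :=
  l.foldr (fun i L => (pderiv i).toLinearMap ∘ₗ L) LinearMap.id

/-- The space of homogeneous forms of degree `d` with multiplicity at least `d`
(all iterated partial derivatives of order `< d`, including the form itself, vanish)
at each of the given points. -/
noncomputable def formsOfDegDWithMultD (k : Type*) [Field k] (n r d : ℕ)
    (p : Fin r → (Fin (n + 1) → k)) : Submodule k (MvPolynomial (Fin (n + 1)) k) :=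
  homogeneousSubmodule (Fin (n + 1)) k d ⊓
    ⨅ (i : Fin r) (l : List (Fin (n + 1))) (_ : l.length < d),
      LinearMap.ker ((aeval (p i)).toLinearMap ∘ₗ iterPderiv k l)

section Multiplicity

variable {k σ : Type*} [CommSemiring k]

@[simp] lemma iterPderiv_nil : iterPderiv k ([] : List σ) = LinearMap.id := rfl

@[simp] lemma iterPderiv_cons (i : σ) (l : List σ) (F : MvPolynomial σ k) :
    iterPderiv k (i :: l) F = pderiv i (iterPderiv k l F) := rfl

variable (k) in
noncomputable def multSubmodule (m : ℕ) (x : σ → k) : Submodule k (MvPolynomial σ k) :=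
  ⨅ (l : List σ) (_ : l.length < m), LinearMap.ker ((aeval x).toLinearMap ∘ₗ iterPderiv k l)

lemma mem_multSubmodule {m : ℕ} {x : σ → k} {F : MvPolynomial σ k} :
    F ∈ multSubmodule k m x ↔ ∀ l : List σ, l.length < m → eval x (iterPderiv k l F) = 0 := by
  simp [multSubmodule]

end Multiplicity

lemma formsOfDegDWithMultD_eq (k : Type*) [Field k] (n r d : ℕ) (p : Fin r → Fin (n + 1) → k) :
    formsOfDegDWithMultD k n r d p =
      homogeneousSubmodule (Fin (n + 1)) k d ⊓ ⨅ i, multSubmodule k d (p i) :=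
  rfl

lemma Multiset.degree_toFinsupp {σ : Type*} [DecidableEq σ] (s : Multiset σ) :
    (Multiset.toFinsupp s).degree = Multiset.card s :=
  Multiset.toFinsupp_sum_eq s

namespace MvPolynomial

variable {k σ : Type*} [CommSemiring k]

lemma isHomogeneous_iff_degree_eq {F : MvPolynomial σ k} {n : ℕ} :
    F.IsHomogeneous n ↔ ∀ β, coeff β F ≠ 0 → β.degree = n := by
  rw [Finsupp.degree_eq_weight_one]
  rfl

lemma eval_piSingle_one_of_isHomogeneous [DecidableEq σ] {G : MvPolynomial σ k} {e : ℕ}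
    (hG : G.IsHomogeneous e) (j : σ) :
    eval (Pi.single j 1) G = coeff (Finsupp.single j e) G := by
  rw [eval_eq, Finset.sum_eq_single (Finsupp.single j e)]
  · rw [Finset.prod_eq_one fun i hi => ?_, mul_one]
    rw [Finset.mem_singleton.mp (Finsupp.support_single_subset hi), Pi.single_eq_same, one_pow]
  · intro β hβ hne
    obtain ⟨t, ht, htj⟩ : ∃ t ∈ β.support, t ≠ j := by
      by_contra! h
      have hβ' : β = Finsupp.single j (β j) :=
        Finsupp.support_subset_singleton.mp fun t ht => by simpa using h t ht
      refine hne (hβ'.trans (congrArg _ ?_))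
      by_contra hdeg
      exact mem_support_iff.mp hβ
        (hG.coeff_eq_zero (by rw [hβ', Finsupp.degree_single]; simpa using hdeg))
    rw [Finset.prod_eq_zero ht (by simp [htj, zero_pow (Finsupp.mem_support_iff.mp ht)]),
      mul_zero]
  · intro h
    rw [notMem_support_iff.mp h, zero_mul]

lemma coeff_iterPderiv [DecidableEq σ] (l : List σ) (γ : σ →₀ ℕ) :
    ∃ c : ℕ, c ≠ 0 ∧ ∀ F : MvPolynomial σ k,
      coeff γ (iterPderiv k l F) = coeff (γ + Multiset.toFinsupp l) F * c := by
  induction l generalizing γ with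
  | nil => exact ⟨1, one_ne_zero, fun F => by simp⟩
  | cons t l ih =>
    obtain ⟨c, hc, hcoeff⟩ := ih (γ + Finsupp.single t 1)
    refine ⟨c * (γ t + 1), by positivity, fun F => ?_⟩
    rw [iterPderiv_cons, coeff_pderiv, hcoeff, ← Multiset.cons_coe, ← Multiset.singleton_add,
      Multiset.toFinsupp_add, Multiset.toFinsupp_singleton, add_assoc]
    push_cast
    ring

lemma IsHomogeneous.iterPderiv [DecidableEq σ] {F : MvPolynomial σ k} {d : ℕ}
    (hF : F.IsHomogeneous d) (l : List σ) :
    (iterPderiv k l F).IsHomogeneous (d - l.length) := by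
  rw [isHomogeneous_iff_degree_eq] at hF ⊢
  intro γ hγ
  obtain ⟨c, -, h⟩ := coeff_iterPderiv (k := k) l γ
  rw [h] at hγ
  have := hF _ (left_ne_zero_of_mul hγ)
  rw [map_add, Multiset.degree_toFinsupp, Multiset.coe_card] at this
  omega

end MvPolynomial

lemma mem_multSubmodule_piSingle_iff {k σ : Type*} [CommSemiring k] [NoZeroDivisors k]
    [CharZero k] [DecidableEq σ] {F : MvPolynomial σ k} {d : ℕ} (hF : F.IsHomogeneous d)
    (j : σ) : F ∈ multSubmodule k d (Pi.single j 1) ↔ j ∉ F.vars := by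
  have eval_eq_zero_iff : ∀ l : List σ, eval (Pi.single j 1) (iterPderiv k l F) = 0 ↔
      coeff (Finsupp.single j (d - l.length) + Multiset.toFinsupp l) F = 0 := fun l => by
    obtain ⟨c, hc, h⟩ := coeff_iterPderiv (k := k) l (Finsupp.single j (d - l.length))
    rw [eval_piSingle_one_of_isHomogeneous (hF.iterPderiv l), h, mul_eq_zero, Nat.cast_eq_zero]
    simp [hc]
  simp only [mem_multSubmodule, eval_eq_zero_iff, mem_vars_iff_mem_support, not_exists, not_and]
  constructor
  · intro h β hβ hjβ
    set β' := β - Finsupp.single j 1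
    have hsplit : Finsupp.single j 1 + β' = β :=
      add_tsub_cancel_of_le (Finsupp.single_le_iff.mpr (Nat.one_le_iff_ne_zero.mpr
        (Finsupp.mem_support_iff.mp hjβ)))
    have hdeg : 1 + β'.degree = d := by
      rw [← Finsupp.degree_single j 1, ← map_add, hsplit]
      exact isHomogeneous_iff_degree_eq.mp hF β (mem_support_iff.mp hβ)
    have hlen : β'.toMultiset.toList.length = β'.degree := by
      rw [Multiset.length_toList, Finsupp.card_toMultiset]
      rfl
    apply mem_support_iff.mp hβ
    have := h β'.toMultiset.toList (by omega)
    rwa [hlen, show d - β'.degree = 1 by omega, Multiset.coe_toList,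
      Finsupp.toMultiset_toFinsupp, hsplit] at this
  · intro h l hl
    by_contra hne
    refine h _ (mem_support_iff.mpr hne) ?_
    rw [Finsupp.mem_support_iff, Finsupp.add_apply, Finsupp.single_eq_same]
    omega

lemma MvPolynomial.pderiv_aeval {R σ ι : Type*} [CommSemiring R] [Fintype σ]
    (g : σ → MvPolynomial ι R) (t : ι) (F : MvPolynomial σ R) :
    pderiv t (aeval g F) = ∑ j, pderiv t (g j) * aeval g (pderiv j F) := by
  classical
  induction F using MvPolynomial.induction_on with
  | C a => simp
  | add F G hF hG => simp only [map_add, hF, hG, mul_add, Finset.sum_add_distrib]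
  | mul_X F s hF =>
    simp only [map_mul, aeval_X, Derivation.leibniz, pderiv_X, smul_eq_mul, hF, map_add,
      Pi.single_apply, apply_ite (aeval g), map_zero, mul_add, Finset.sum_add_distrib,
      mul_ite, mul_one, mul_zero, Finset.sum_ite_eq, Finset.mem_univ, if_true, Finset.mul_sum]
    ring_nf

section LinSubst

open Matrix

variable {R ι : Type*} [CommSemiring R] [Fintype ι]

noncomputable def linSubst (A : Matrix ι ι R) : MvPolynomial ι R →ₐ[R] MvPolynomial ι R :=
  aeval fun j => ∑ s, C (A j s) * X s

lemma linSubst_X (A : Matrix ι ι R) (j : ι) : linSubst A (X j) = ∑ s, C (A j s) * X s :=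
  aeval_X _ _

lemma eval_linSubst (A : Matrix ι ι R) (x : ι → R) (F : MvPolynomial ι R) :
    eval x (linSubst A F) = eval (A *ᵥ x) F := by
  change aeval x (linSubst A F) = aeval (A *ᵥ x) F
  rw [linSubst, comp_aeval_apply]
  congr 1
  ext j
  simp [Matrix.mulVec, dotProduct]

lemma linSubst_comp_linSubst (A B : Matrix ι ι R) :
    (linSubst A).comp (linSubst B) = linSubst (B * A) := by
  refine algHom_ext fun j => ?_
  simp [linSubst_X, Matrix.mul_apply, Finset.mul_sum, Finset.sum_mul, mul_assoc]
  exact Finset.sum_comm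

lemma linSubst_one [DecidableEq ι] : linSubst (1 : Matrix ι ι R) = AlgHom.id R _ :=
  algHom_ext fun j => by simp [linSubst_X, Matrix.one_apply]

lemma MvPolynomial.IsHomogeneous.linSubst {F : MvPolynomial ι R} {d : ℕ}
    (hF : F.IsHomogeneous d) (A : Matrix ι ι R) : (linSubst A F).IsHomogeneous d := by
  have := hF.aeval (fun j => ∑ s, C (A j s) * X s) fun j =>
    (homogeneousSubmodule ι R 1).sum_mem fun s _ => isHomogeneous_C_mul_X (A j s) s
  rwa [one_mul] at this

lemma pderiv_linSubst (A : Matrix ι ι R) (t : ι) (F : MvPolynomial ι R) :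
    pderiv t (linSubst A F) = ∑ j, A j t • linSubst A (pderiv j F) := by
  classical
  simp only [linSubst, pderiv_aeval, map_sum, pderiv_C_mul, pderiv_X, Pi.single_apply, mul_ite,
    mul_one, mul_zero, Finset.sum_ite_eq', Finset.mem_univ, if_true]
  exact Finset.sum_congr rfl fun _ _ => C_mul'

lemma iterPderiv_linSubst_mem_span (A : Matrix ι ι R) (F : MvPolynomial ι R) (l : List ι) :
    iterPderiv R l (linSubst A F) ∈ Submodule.span R
      {G | ∃ l' : List ι, l'.length = l.length ∧ G = linSubst A (iterPderiv R l' F)} := by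
  induction l with
  | nil => exact Submodule.subset_span ⟨[], rfl, rfl⟩
  | cons t l ih =>
    rw [iterPderiv_cons]
    refine Submodule.mem_comap.mp
      ((Submodule.span_le (p := Submodule.comap (pderiv t).toLinearMap _)).mpr ?_ ih)
    rintro _ ⟨l', hl', rfl⟩
    rw [SetLike.mem_coe, Submodule.mem_comap, Derivation.coeFn_coe, pderiv_linSubst]
    exact Submodule.sum_mem _ fun j _ => Submodule.smul_mem _ _
      (Submodule.subset_span ⟨j :: l', by simp [hl'], rfl⟩)

lemma multSubmodule_mulVec_le_comap_linSubst (A : Matrix ι ι R) (m : ℕ) (x : ι → R) :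
    multSubmodule R m (A *ᵥ x) ≤ (multSubmodule R m x).comap (linSubst A).toLinearMap := by
  intro F hF
  rw [Submodule.mem_comap, mem_multSubmodule]
  intro l hl
  have hspan : Submodule.span R
      {G | ∃ l' : List ι, l'.length = l.length ∧ G = linSubst A (iterPderiv R l' F)} ≤
      LinearMap.ker (aeval x).toLinearMap := by
    rw [Submodule.span_le]
    rintro _ ⟨l', hl', rfl⟩
    rw [SetLike.mem_coe, LinearMap.mem_ker, AlgHom.toLinearMap_apply, aeval_eq_eval, eval_linSubst]
    exact mem_multSubmodule.mp hF l' (hl' ▸ hl)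
  exact hspan (iterPderiv_linSubst_mem_span A F l)

variable [DecidableEq ι]

noncomputable def linSubstEquiv (g : (ι → R) ≃ₗ[R] (ι → R)) :
    MvPolynomial ι R ≃ₐ[R] MvPolynomial ι R :=
  AlgEquiv.ofAlgHom (linSubst (LinearMap.toMatrix' g)) (linSubst (LinearMap.toMatrix' g.symm))
    (by rw [linSubst_comp_linSubst, ← LinearMap.toMatrix'_comp, g.symm_comp,
      LinearMap.toMatrix'_id, linSubst_one])
    (by rw [linSubst_comp_linSubst, ← LinearMap.toMatrix'_comp, g.comp_symm,
      LinearMap.toMatrix'_id, linSubst_one])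

lemma linSubstEquiv_apply (g : (ι → R) ≃ₗ[R] (ι → R)) (F : MvPolynomial ι R) :
    linSubstEquiv g F = linSubst (LinearMap.toMatrix' g) F :=
  rfl

lemma linSubstEquiv_symm_apply (g : (ι → R) ≃ₗ[R] (ι → R)) (F : MvPolynomial ι R) :
    (linSubstEquiv g).symm F = linSubst (LinearMap.toMatrix' g.symm) F :=
  rfl

lemma comap_linSubstEquiv_multSubmodule (g : (ι → R) ≃ₗ[R] (ι → R)) (m : ℕ) (x : ι → R) :
    (multSubmodule R m x).comap (linSubstEquiv g).toLinearMap = multSubmodule R m (g x) := by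
  refine le_antisymm (fun F hF => ?_) fun F hF => ?_
  · rw [Submodule.mem_comap, AlgEquiv.toLinearMap_apply] at hF
    rw [← (linSubstEquiv g).symm_apply_apply F, linSubstEquiv_symm_apply]
    refine Submodule.mem_comap.mp (multSubmodule_mulVec_le_comap_linSubst _ m (g x) ?_)
    rwa [LinearMap.toMatrix'_mulVec, LinearEquiv.coe_coe, g.symm_apply_apply]
  · have := multSubmodule_mulVec_le_comap_linSubst (LinearMap.toMatrix' g) m x
    rw [LinearMap.toMatrix'_mulVec, LinearEquiv.coe_coe] at this
    rw [Submodule.mem_comap, AlgEquiv.toLinearMap_apply, linSubstEquiv_apply]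
    exact Submodule.mem_comap.mp (this hF)

lemma comap_linSubstEquiv_homogeneousSubmodule (g : (ι → R) ≃ₗ[R] (ι → R)) (d : ℕ) :
    (homogeneousSubmodule ι R d).comap (linSubstEquiv g).toLinearMap =
      homogeneousSubmodule ι R d := by
  refine le_antisymm (fun F hF => ?_) fun F hF => ?_
  · rw [← (linSubstEquiv g).symm_apply_apply F, linSubstEquiv_symm_apply]
    exact IsHomogeneous.linSubst hF _
  · rw [Submodule.mem_comap, AlgEquiv.toLinearMap_apply, linSubstEquiv_apply]
    exact IsHomogeneous.linSubst hF _

end LinSubst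

lemma exists_linearEquiv_apply_eq_piSingle {K κ ι : Type*} [Field K] [Fintype ι] [DecidableEq ι]
    {p : κ → ι → K} (hp : LinearIndependent K p) :
    ∃ (g : (ι → K) ≃ₗ[K] (ι → K)) (f : κ → ι), f.Injective ∧ ∀ i, g (p i) = Pi.single (f i) 1 := by
  have hs : LinearIndepOn K id (Set.range p) := hp.linearIndepOn_id
  let b := Module.Basis.extend hs
  have : Finite (hs.extend (Set.subset_univ _)) := Module.Finite.finite_basis b
  obtain ⟨e⟩ := Finite.card_eq.mp <| (Module.finrank_eq_nat_card_basis b).symm.trans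
    (Module.finrank_eq_nat_card_basis (Pi.basisFun K ι))
  let f : κ → hs.extend (Set.subset_univ _) := fun i =>
    ⟨p i, Module.Basis.subset_extend hs ⟨i, rfl⟩⟩
  refine ⟨(b.reindex e).equivFun, e ∘ f, e.injective.comp fun i j h => hp.injective
    (congrArg Subtype.val h), fun i => ?_⟩
  have hb : b.reindex e (e (f i)) = p i := by
    rw [Module.Basis.reindex_apply, e.symm_apply_apply, Module.Basis.coe_extend]
  ext j
  rw [← hb, Module.Basis.equivFun_self, Pi.single_apply]
  exact if_congr eq_comm rfl rfl

section Counting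

variable {k σ : Type*}

lemma homogeneousSubmodule_inf_multSubmodule_piSingle [CommSemiring k] [NoZeroDivisors k]
    [CharZero k] [DecidableEq σ] {κ : Type*} (f : κ → σ) (d : ℕ) :
    homogeneousSubmodule σ k d ⊓ ⨅ i, multSubmodule k d (Pi.single (f i) 1) =
      homogeneousSubmodule σ k d ⊓ Subalgebra.toSubmodule (supported k (Set.range f)ᶜ) := by
  ext F
  simp only [Submodule.mem_inf, Submodule.mem_iInf, mem_homogeneousSubmodule,
    Subalgebra.mem_toSubmodule, mem_supported]
  refine and_congr_right fun hF => ?_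
  simp only [mem_multSubmodule_piSingle_iff hF, Set.subset_compl_comm, Set.range_subset_iff]
  rfl

lemma MvPolynomial.homogeneousSubmodule_inf_supported [CommSemiring k] (s : Set σ) (d : ℕ) :
    homogeneousSubmodule σ k d ⊓ Subalgebra.toSubmodule (supported k s) =
      (homogeneousSubmodule s k d).map (rename ((↑) : s → σ)).toLinearMap := by
  ext F
  simp only [Submodule.mem_inf, mem_homogeneousSubmodule, Subalgebra.mem_toSubmodule,
    supported_eq_range_rename, AlgHom.mem_range, Submodule.mem_map, AlgHom.toLinearMap_apply]
  constructor
  · rintro ⟨hF, G, rfl⟩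
    exact ⟨G, (IsHomogeneous.rename_isHomogeneous_iff Subtype.val_injective).mp hF, rfl⟩
  · rintro ⟨G, hG, rfl⟩
    exact ⟨hG.rename_isHomogeneous, G, rfl⟩

lemma MvPolynomial.finrank_homogeneousSubmodule [CommSemiring k] [StrongRankCondition k]
    [Fintype σ] (d : ℕ) :
    Module.finrank k (homogeneousSubmodule σ k d) = (Fintype.card σ + d - 1).choose d := by
  classical
  have hset : {β : σ →₀ ℕ | β.degree = d} = ↑((Finset.univ : Finset σ).finsuppAntidiag d) := by
    ext β
    simp [Finset.mem_finsuppAntidiag, Finsupp.degree_eq_sum]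
  rw [homogeneousSubmodule_eq_finsupp_supported, hset,
    (AddMonoidAlgebra.supportedEquivFinsupp _).finrank_eq, Module.finrank_finsupp_self]
  simp only [Finset.coe_sort_coe, Fintype.card_coe, Finset.card_finsuppAntidiag_nat_eq_choose,
    Finset.card_univ]

lemma MvPolynomial.finrank_homogeneousSubmodule_inf_supported [CommSemiring k]
    [StrongRankCondition k] (s : Set σ) [Fintype s] (d : ℕ) :
    Module.finrank k ↥(homogeneousSubmodule σ k d ⊓ Subalgebra.toSubmodule (supported k s)) =
      (Fintype.card s + d - 1).choose d := by
  rw [homogeneousSubmodule_inf_supported, ← finrank_homogeneousSubmodule (k := k)]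
  exact (Submodule.equivMapOfInjective _ (rename_injective _ Subtype.val_injective) _).finrank_eq
    |>.symm

end Counting

theorem finrank_homogeneousSubmodule_inf_multSubmodule {K ι κ : Type*} [Field K] [CharZero K]
    [Fintype ι] [DecidableEq ι] [Fintype κ] {p : κ → ι → K} (hp : LinearIndependent K p)
    (d : ℕ) :
    Module.finrank K ↥(homogeneousSubmodule ι K d ⊓ ⨅ i, multSubmodule K d (p i)) =
      (Fintype.card ι - Fintype.card κ + d - 1).choose d := by
  obtain ⟨g, f, hf, hgp⟩ := exists_linearEquiv_apply_eq_piSingle hp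
  have hcomap : homogeneousSubmodule ι K d ⊓ ⨅ i, multSubmodule K d (p i) =
      (homogeneousSubmodule ι K d ⊓ ⨅ i, multSubmodule K d (Pi.single (f i) 1)).comap
        (linSubstEquiv g.symm).toLinearMap := by
    simp only [Submodule.comap_inf, Submodule.comap_iInf, comap_linSubstEquiv_homogeneousSubmodule,
      comap_linSubstEquiv_multSubmodule, ← hgp, LinearEquiv.symm_apply_apply]
  rw [hcomap, ← AlgEquiv.toLinearEquiv_toLinearMap, Submodule.comap_equiv_eq_map_symm,
    LinearEquiv.finrank_map_eq, homogeneousSubmodule_inf_multSubmodule_piSingle,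
    finrank_homogeneousSubmodule_inf_supported, Fintype.card_compl_set,
    Set.card_range_of_injective hf]

theorem stmt1_general (k : Type*) [Field k] [CharZero k] (n r d : ℕ)
    (hrn : r ≤ n)
    (p : Fin r → (Fin (n + 1) → k)) (hp : LinearIndependent k p) :
    Module.finrank k (formsOfDegDWithMultD k n r d p) = Nat.choose (n - r + d) d := by
  rw [formsOfDegDWithMultD_eq, finrank_homogeneousSubmodule_inf_multSubmodule hp,
    Fintype.card_fin, Fintype.card_fin]
  congr 1
  omega

theorem stmt1 (k : Type*) [Field k] [CharZero k] (n r d : ℕ)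
    (hn : 1 ≤ n) (hr1 : 1 ≤ r) (hrn : r ≤ n) (hd : 1 ≤ d)
    (p : Fin r → (Fin (n + 1) → k)) (hp : LinearIndependent k p) :
    Module.finrank k (formsOfDegDWithMultD k n r d p) = Nat.choose (n - r + d) d :=
  stmt1_general k n r d hrn p hp
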